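/- arXiv:2303.00862 — 2 statements merged into one kernel-verified Lean document; each statement's English description precedes it below -/
import Mathlib

section
/- Over an algebraically closed field of characteristic zero, the evolution algebra E_n degenerates to I_n: there is a curve of invertible matrices g(t) (t ≠ 0) such that the algebras g(t) * E_n (with product (x,y) ↦ g(t)·μ_{E_n}(g(t)⁻¹x, g(t)⁻¹y)) converge, as t → 0, entrywise in structure constants to the algebra I_n. Explicitly, with g(t)(e_1) = (1+t²)e_1 + i·e_2, g(t)(e_2) = i(1−t²)e_1 − e_2, g(t)(e_k) = √2·t·e_k for 3 ≤ k ≤ n, the structure constants of g(t) * E_n are polynomial in t and evaluate at t = 0 to those of I_n. -/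
/-!
Let `w = e₀ + i e₁`, isotropic for the dot product, so that `μ_E(x, y) = (x ⬝ᵥ y) e₀` and
`μ_I(x, y) = (x ⬝ᵥ y) w`. The map `h(t) = degenMap n t`, the paper's `g(t / √2)` (which avoids
`√2`), sends `w ↦ t² e₀`, `(e₀ - i e₁)/2 ↦ w` and `eₖ ↦ t eₖ` (`k ≥ 2`); in this hyperbolic basis
one reads off `h(t)x ⬝ᵥ h(t)y = t² (x ⬝ᵥ y + t² α(x) α(y))` with `α(x) = (x₀ - i x₁)/2`.
Transporting `μ_E` along `h(t)⁻¹` therefore gives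
`(h(t)x ⬝ᵥ h(t)y) • h(t)⁻¹e₀ = (x ⬝ᵥ y + t² α(x) α(y)) w`, polynomial in `t` and `μ_I` at `t = 0`.
-/

/-- The evolution algebra `E_n` on `Fin (n+2) → ℂ`: `eⱼ² = e₀`, `eⱼeₖ = 0` (`j ≠ k`). -/
noncomputable def enMul {n : ℕ} (x y : Fin (n + 2) → ℂ) : Fin (n + 2) → ℂ :=
  fun k => if k = 0 then ∑ i, x i * y i else 0

/-- The evolution algebra `I_n` on `Fin (n+2) → ℂ`: `eⱼ² = e₀ + i·e₁`, `eⱼeₖ = 0`. -/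
noncomputable def inMul {n : ℕ} (x y : Fin (n + 2) → ℂ) : Fin (n + 2) → ℂ :=
  fun k => if k = 0 then ∑ i, x i * y i
    else if k = 1 then Complex.I * ∑ i, x i * y i else 0

open Complex Polynomial

noncomputable def degenMap (n : ℕ) (t : ℂ) : (Fin (n + 2) → ℂ) →ₗ[ℂ] (Fin (n + 2) → ℂ) where
  toFun x k := if k = 0 then (1 + t ^ 2 / 2) * x 0 + I * (1 - t ^ 2 / 2) * x 1
    else if k = 1 then I * x 0 - x 1 else t * x k
  map_add' x y := by
    ext k
    simp only [Pi.add_apply]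
    split_ifs <;> ring
  map_smul' c x := by
    ext k
    simp only [Pi.smul_apply, smul_eq_mul, RingHom.id_apply]
    split_ifs <;> ring

def isotropicVec (n : ℕ) : Fin (n + 2) → ℂ := fun k => if k = 0 then 1 else if k = 1 then I else 0

noncomputable def degenCoeff {n : ℕ} (x : Fin (n + 2) → ℂ) : ℂ := (x 0 - I * x 1) / 2

section

variable {n : ℕ}

theorem enMul_eq_smul (x y : Fin (n + 2) → ℂ) : enMul x y = (x ⬝ᵥ y) • Pi.single 0 1 := by
  ext k
  by_cases hk : k = 0 <;> simp [enMul, dotProduct, hk]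

theorem inMul_eq_smul (x y : Fin (n + 2) → ℂ) : inMul x y = (x ⬝ᵥ y) • isotropicVec n := by
  ext k
  simp only [inMul, isotropicVec, dotProduct, Pi.smul_apply, smul_eq_mul]
  split_ifs <;> ring

theorem degenMap_apply (t : ℂ) (x : Fin (n + 2) → ℂ) (k : Fin (n + 2)) :
    degenMap n t x k = if k = 0 then (1 + t ^ 2 / 2) * x 0 + I * (1 - t ^ 2 / 2) * x 1
      else if k = 1 then I * x 0 - x 1 else t * x k :=
  rfl

theorem degenMap_isotropicVec (t : ℂ) :
    degenMap n t (isotropicVec n) = t ^ 2 • Pi.single 0 1 := by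
  ext k
  by_cases h0 : k = 0
  · subst h0
    simp only [degenMap_apply, isotropicVec, if_true, if_neg one_ne_zero, Pi.smul_apply,
      Pi.single_eq_same, smul_eq_mul]
    linear_combination (1 - t ^ 2 / 2) * I_sq
  by_cases h1 : k = 1
  · subst h1
    simp [degenMap_apply, isotropicVec]
  · simp [degenMap_apply, isotropicVec, h0, h1]

theorem degenMap_dotProduct (t : ℂ) (x y : Fin (n + 2) → ℂ) :
    degenMap n t x ⬝ᵥ degenMap n t y =
      t ^ 2 * (x ⬝ᵥ y + t ^ 2 * degenCoeff x * degenCoeff y) := by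
  simp only [dotProduct, Fin.sum_univ_succ (n := n + 1), Fin.sum_univ_succ (n := n)]
  simp only [degenMap_apply, degenCoeff, Fin.succ_ne_zero, Fin.succ_succ_ne_one, if_true,
    if_false, Fin.succ_zero_eq_one, one_ne_zero]
  have tail : ∑ i : Fin n, t * x i.succ.succ * (t * y i.succ.succ) =
      t ^ 2 * ∑ i : Fin n, x i.succ.succ * y i.succ.succ := by
    rw [Finset.mul_sum]
    exact Finset.sum_congr rfl fun i _ => by ring
  linear_combination
    tail + ((1 - t ^ 2 / 2) ^ 2 * x 1 * y 1 + x 0 * y 0 - t ^ 4 / 4 * x 1 * y 1) * I_sq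

theorem degenMap_injective {t : ℂ} (ht : t ≠ 0) : Function.Injective (degenMap n t) := by
  rw [← LinearMap.ker_eq_bot, LinearMap.ker_eq_bot']
  intro x hx
  have h0 := congrFun hx 0
  have h1 := congrFun hx 1
  simp only [degenMap_apply, if_true, if_neg one_ne_zero, Pi.zero_apply] at h0 h1
  have hx0 : x 0 = 0 := by
    have : t ^ 2 * x 0 = 0 := by
      linear_combination h0 + I * (1 - t ^ 2 / 2) * h1 - (1 - t ^ 2 / 2) * x 0 * I_sq
    simpa [ht] using this
  ext k
  by_cases hk0 : k = 0
  · subst hk0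
    exact hx0
  by_cases hk1 : k = 1
  · subst hk1
    simpa [hx0] using h1
  · simpa [degenMap_apply, hk0, hk1, ht] using congrFun hx k

end

noncomputable def degenCurve (n : ℕ) (t : ℂ) : (Fin (n + 2) → ℂ) ≃ₗ[ℂ] (Fin (n + 2) → ℂ) :=
  if ht : t = 0 then LinearEquiv.refl ℂ _
  else (LinearEquiv.ofInjectiveEndo _ (degenMap_injective ht)).symm

section

variable {n : ℕ} {t : ℂ}

theorem degenCurve_symm_apply (ht : t ≠ 0) (x : Fin (n + 2) → ℂ) :
    (degenCurve n t).symm x = degenMap n t x := by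
  simp [degenCurve, ht]

theorem degenCurve_single_zero (ht : t ≠ 0) :
    degenCurve n t (Pi.single 0 1) = (t ^ 2)⁻¹ • isotropicVec n := by
  apply (degenCurve n t).symm.injective
  rw [LinearEquiv.symm_apply_apply, degenCurve_symm_apply ht, map_smul, degenMap_isotropicVec,
    smul_smul, inv_mul_cancel₀ (pow_ne_zero 2 ht), one_smul]

theorem degenCurve_transport_enMul (ht : t ≠ 0) (x y : Fin (n + 2) → ℂ) :
    degenCurve n t (enMul ((degenCurve n t).symm x) ((degenCurve n t).symm y)) =
      (x ⬝ᵥ y + t ^ 2 * degenCoeff x * degenCoeff y) • isotropicVec n := by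
  rw [degenCurve_symm_apply ht, degenCurve_symm_apply ht, enMul_eq_smul, map_smul,
    degenMap_dotProduct, degenCurve_single_zero ht, smul_smul]
  congr 1
  field_simp

end

/-- **`E_n` degenerates to `I_n`.** There is a curve `g(t)` of invertible linear maps
(`t ≠ 0`) such that the structure constants of the transported multiplication
`(x, y) ↦ g(t)(μ_{E_n}(g(t)⁻¹x, g(t)⁻¹y))` are polynomial in `t` and evaluate at
`t = 0` to the structure constants of `I_n`. -/
theorem stmt_15 (n : ℕ) :
    ∃ g : ℂ → ((Fin (n + 2) → ℂ) ≃ₗ[ℂ] (Fin (n + 2) → ℂ)),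
      ∀ a b l : Fin (n + 2), ∃ P : Polynomial ℂ,
        (∀ t : ℂ, t ≠ 0 →
          (g t) (enMul ((g t).symm (Pi.single a 1)) ((g t).symm (Pi.single b 1))) l
            = P.eval t) ∧
        P.eval 0 = inMul (Pi.single a 1) (Pi.single b 1) l := by
  refine ⟨degenCurve n, fun a b l => ⟨(C (Pi.single a 1 ⬝ᵥ Pi.single b 1) +
    C (degenCoeff (Pi.single a 1) * degenCoeff (Pi.single b 1)) * X ^ 2) * C (isotropicVec n l),
    fun t ht => ?_, ?_⟩⟩
  · rw [degenCurve_transport_enMul ht]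
    simp only [eval_mul, eval_add, eval_C, eval_pow, eval_X, Pi.smul_apply, smul_eq_mul]
    ring
  · simp [inMul_eq_smul]
end

section
/- The evolution algebra E_n (e_i² = e_1 for all i, e_ie_j = 0 for i ≠ j) satisfies the polynomial identity ((xy)z)t = ((xy)t)z for all x, y, z, t, but does not satisfy any nontrivial polynomial identity of degree three. -/
lemma sum_ind {n : ℕ} (A : ℂ) (c : Fin (n + 2) → ℂ) :
    ∑ i, (if i = 0 then A else 0) * c i = A * c 0 := by
  rw [Finset.sum_eq_single 0]
  · simp
  · intro i _ hi; simp [hi]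
  · simp

lemma key {n : ℕ} (a b c : Fin (n + 2) → ℂ) :
    enMul (enMul a b) c = fun k => if k = 0 then (∑ i, a i * b i) * c 0 else 0 := by
  funext k
  simp only [enMul]
  congr 1
  exact sum_ind _ _

/-- **Identities of `E_n`.** `E_n` satisfies the degree-four identity
`((xy)z)t = ((xy)t)z`, but satisfies no nontrivial (multilinear) polynomial identity
of degree three: if `c₁(xy)z + c₂(xz)y + c₃(yz)x = 0` holds identically then
`c₁ = c₂ = c₃ = 0`. -/
theorem stmt_16 (n : ℕ) :
    (∀ x y z t : Fin (n + 2) → ℂ,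
      enMul (enMul (enMul x y) z) t = enMul (enMul (enMul x y) t) z) ∧
    (∀ c₁ c₂ c₃ : ℂ,
      (∀ x y z : Fin (n + 2) → ℂ,
        c₁ • enMul (enMul x y) z + c₂ • enMul (enMul x z) y
          + c₃ • enMul (enMul y z) x = 0) →
      c₁ = 0 ∧ c₂ = 0 ∧ c₃ = 0) := by
  constructor
  · intro x y z t
    rw [key, key]
    funext k
    simp only [enMul, sum_ind]
    split
    · ring
    · rfl
  · intro c₁ c₂ c₃ h
    set e0 : Fin (n+2) → ℂ := fun i => if i = 0 then 1 else 0 with he0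
    set e1 : Fin (n+2) → ℂ := fun i => if i = 1 then 1 else 0 with he1
    have h01 : (0 : Fin (n+2)) ≠ 1 := by simp [Fin.ext_iff]
    have h1 := congrFun (h e1 e1 e0) 0
    have h2 := congrFun (h e1 e0 e1) 0
    have h3 := congrFun (h e0 e1 e1) 0
    simp only [key, Pi.add_apply, Pi.smul_apply, Pi.zero_apply, he0, he1, if_pos rfl,
      smul_eq_mul, ite_mul, one_mul, zero_mul, Finset.sum_ite_eq',
      Finset.mem_univ, if_true, if_neg h01] at h1 h2 h3
    refine ⟨by simpa using h1, by simpa using h2, by simpa using h3⟩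
end
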